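/- arXiv:2401.08620 — 2 statements merged into one kernel-verified Lean document; each statement's English description precedes it below -/
import Mathlib

section
/- Let f:[a,b]→ℝ be continuous and Φ-Hölder with Φ superadditive. Then for every even n ≥ 2, max{f(a), f(b)} − Φ(b−a)/2 ≤ S_n(f)/(b−a) ≤ min{f(a), f(b)} + Φ(b−a)/2, where S_n(f) is the composite Simpson sum. -/
/-!
The nodes `x_j` and `x_{n-j}` are symmetric about the midpoint and carry equal Simpson weights,
so `S_n(f) / (b - a)` is an average of the pair means `(f x + f y) / 2` with `x + y = a + b`.
For such a pair the Hölder bounds at the endpoint `c = a` (or `c = b`) and superadditivity,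
`Φ |x - c| + Φ |y - c| ≤ Φ (b - a)`, give `f x + f y ≤ 2 f c + Φ (b - a)`.
The lower bound is the upper bound for `-f`.
-/

open Finset

theorem two_mul_sum_le_card_mul_of_involution {ι R : Type*} [Semiring R] [PartialOrder R]
    [IsOrderedAddMonoid R] {s : Finset ι} {g : ι → R} {K : R} (σ : ι → ι)
    (hσs : ∀ i ∈ s, σ i ∈ s) (hσ : ∀ i ∈ s, σ (σ i) = i) (hK : ∀ i ∈ s, g i + g (σ i) ≤ K) :
    2 * ∑ i ∈ s, g i ≤ #s * K := by
  have hswap : ∑ i ∈ s, g (σ i) = ∑ i ∈ s, g i :=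
    sum_nbij' σ σ hσs hσs hσ hσ fun _ _ => rfl
  calc 2 * ∑ i ∈ s, g i = ∑ i ∈ s, (g i + g (σ i)) := by rw [sum_add_distrib, hswap, two_mul]
    _ ≤ ∑ _i ∈ s, K := sum_le_sum hK
    _ = #s * K := by rw [sum_const, nsmul_eq_mul]

section Simpson

variable (a b : ℝ) (n : ℕ)

noncomputable def gridPoint (j : ℕ) : ℝ := a + j * (b - a) / n

noncomputable def simpsonSum (f : ℝ → ℝ) : ℝ :=
  (b - a) / (3 * n) * (f a + 2 * ∑ i ∈ Ico 1 (n / 2), f (gridPoint a b n (2 * i)) +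
    4 * ∑ i ∈ Icc 1 (n / 2), f (gridPoint a b n (2 * i - 1)) + f b)

variable {a b n}

theorem gridPoint_mem_Icc (hab : a ≤ b) {j : ℕ} (hj : j ≤ n) : gridPoint a b n j ∈ Set.Icc a b := by
  have h0 : 0 ≤ (j : ℝ) / n := by positivity
  have h1 : (j : ℝ) / n ≤ 1 := div_le_one_of_le₀ (by exact_mod_cast hj) n.cast_nonneg
  rw [gridPoint, mul_comm, mul_div_assoc]
  constructor <;> nlinarith

theorem gridPoint_add_gridPoint_sub (hn : n ≠ 0) {j : ℕ} (hj : j ≤ n) :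
    gridPoint a b n j + gridPoint a b n (n - j) = a + b := by
  rw [gridPoint, gridPoint, Nat.cast_sub hj]
  field_simp
  ring

theorem simpsonSum_neg (f : ℝ → ℝ) : simpsonSum a b n (fun x => -f x) = -simpsonSum a b n f := by
  simp only [simpsonSum, sum_neg_distrib]
  ring

theorem simpsonSum_le_of_add_le {f : ℝ → ℝ} {K : ℝ} (hab : a ≤ b)
    (hK : ∀ x ∈ Set.Icc a b, ∀ y ∈ Set.Icc a b, x + y = a + b → f x + f y ≤ K)
    {m : ℕ} (hm : m ≠ 0) : simpsonSum a b (2 * m) f ≤ (b - a) * K / 2 := by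
  have hn : 2 * m ≠ 0 := by omega
  have hpair : ∀ j ≤ 2 * m,
      f (gridPoint a b (2 * m) j) + f (gridPoint a b (2 * m) (2 * m - j)) ≤ K := fun j hj =>
    hK _ (gridPoint_mem_Icc hab hj) _ (gridPoint_mem_Icc hab (Nat.sub_le _ _))
      (gridPoint_add_gridPoint_sub hn hj)
  have hends : f a + f b ≤ K := hK a ⟨le_rfl, hab⟩ b ⟨hab, le_rfl⟩ rfl
  have heven : 2 * ∑ i ∈ Ico 1 m, f (gridPoint a b (2 * m) (2 * i)) ≤ (m - 1 : ℝ) * K := by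
    calc _ ≤ #(Ico 1 m) * K := by
          refine two_mul_sum_le_card_mul_of_involution (fun i => m - i) ?_ ?_ fun i hi => ?_
          all_goals simp only [mem_Ico] at *
          · omega
          · omega
          · have h := hpair (2 * i) (by omega)
            rwa [show 2 * m - 2 * i = 2 * (m - i) by omega] at h
      _ = (m - 1 : ℝ) * K := by rw [Nat.card_Ico, Nat.cast_pred (by omega)]
  have hodd : 2 * ∑ i ∈ Icc 1 m, f (gridPoint a b (2 * m) (2 * i - 1)) ≤ m * K := by
    calc _ ≤ #(Icc 1 m) * K := by
          refine two_mul_sum_le_card_mul_of_involution (fun i => m + 1 - i) ?_ ?_ fun i hi => ?_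
          all_goals simp only [mem_Icc] at *
          · omega
          · omega
          · have h := hpair (2 * i - 1) (by omega)
            rwa [show 2 * m - (2 * i - 1) = 2 * (m + 1 - i) - 1 by omega] at h
      _ = m * K := by rw [Nat.card_Icc, Nat.add_sub_cancel]
  rw [simpsonSum, Nat.mul_div_cancel_left m two_pos]
  have hba : 0 ≤ b - a := sub_nonneg.mpr hab
  calc (b - a) / (3 * (2 * m : ℕ)) * _ ≤ (b - a) / (3 * (2 * m : ℕ)) * (3 * m * K) := by
        gcongr; linarith
    _ = (b - a) * K / 2 := by push_cast; field_simp

end Simpson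

section Holder

variable {a b : ℝ} {f Φ : ℝ → ℝ}
  (hsuper : ∀ x y, 0 ≤ x → 0 ≤ y → x + y ≤ b - a → Φ x + Φ y ≤ Φ (x + y))
  (hhold : ∀ x ∈ Set.Icc a b, ∀ y ∈ Set.Icc a b, |f x - f y| ≤ Φ |x - y|)
include hsuper hhold

theorem add_le_two_mul_add_of_holder {c x y : ℝ} (hc : c ∈ Set.Icc a b) (hx : x ∈ Set.Icc a b)
    (hy : y ∈ Set.Icc a b) (hdist : |x - c| + |y - c| = b - a) :
    f x + f y ≤ 2 * f c + Φ (b - a) := by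
  have hxc := (le_abs_self _).trans (hhold x hx c hc)
  have hyc := (le_abs_self _).trans (hhold y hy c hc)
  have hΦ := hsuper _ _ (abs_nonneg (x - c)) (abs_nonneg (y - c)) hdist.le
  rw [hdist] at hΦ
  linarith

theorem add_le_two_mul_min_add_of_holder {x y : ℝ} (hx : x ∈ Set.Icc a b)
    (hy : y ∈ Set.Icc a b) (hxy : x + y = a + b) :
    f x + f y ≤ 2 * min (f a) (f b) + Φ (b - a) := by
  have hab : a ≤ b := hx.1.trans hx.2
  have hdist_a : |x - a| + |y - a| = b - a := by
    rw [abs_of_nonneg (sub_nonneg.2 hx.1), abs_of_nonneg (sub_nonneg.2 hy.1)]; linarith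
  have hdist_b : |x - b| + |y - b| = b - a := by
    rw [abs_of_nonpos (sub_nonpos.2 hx.2), abs_of_nonpos (sub_nonpos.2 hy.2)]; linarith
  have ha := add_le_two_mul_add_of_holder hsuper hhold ⟨le_rfl, hab⟩ hx hy hdist_a
  have hb := add_le_two_mul_add_of_holder hsuper hhold ⟨hab, le_rfl⟩ hx hy hdist_b
  rcases min_choice (f a) (f b) with h | h <;> rw [h] <;> assumption

theorem simpsonSum_div_le (hab : a < b) {m : ℕ} (hm : m ≠ 0) :
    simpsonSum a b (2 * m) f / (b - a) ≤ min (f a) (f b) + Φ (b - a) / 2 := by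
  have hS := simpsonSum_le_of_add_le hab.le
    (fun x hx y hy hxy => add_le_two_mul_min_add_of_holder hsuper hhold hx hy hxy) hm
  rw [div_le_iff₀ (sub_pos.2 hab)]
  linarith

theorem le_simpsonSum_div (hab : a < b) {m : ℕ} (hm : m ≠ 0) :
    max (f a) (f b) - Φ (b - a) / 2 ≤ simpsonSum a b (2 * m) f / (b - a) := by
  have hhold_neg : ∀ x ∈ Set.Icc a b, ∀ y ∈ Set.Icc a b, |-f x - -f y| ≤ Φ |x - y| :=
    fun x hx y hy => by rw [neg_sub_neg, abs_sub_comm]; exact hhold x hx y hy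
  have hS := simpsonSum_div_le hsuper hhold_neg hab hm
  rw [simpsonSum_neg, min_neg_neg, neg_div] at hS
  linarith

end Holder

theorem simpson_phi_holder_superadditive_general
    (a b : ℝ) (hab : a < b) (f Φ : ℝ → ℝ)
    (hsuper : ∀ x y, 0 ≤ x → 0 ≤ y → x + y ≤ b - a → Φ x + Φ y ≤ Φ (x + y))
    (hhold : ∀ x ∈ Set.Icc a b, ∀ y ∈ Set.Icc a b, |f x - f y| ≤ Φ |x - y|)
    (n : ℕ) (hn : 2 ≤ n) (hne : Even n) :
    max (f a) (f b) - Φ (b - a) / 2 ≤ ((b - a) / (3 * n) * (f a + 2 * ∑ i ∈ Finset.Ico 1 (n / 2), f (a + (2 * i : ℕ) * (b - a) / n) + 4 * ∑ i ∈ Finset.Icc 1 (n / 2), f (a + (2 * i - 1 : ℕ) * (b - a) / n) + f b)) / (b - a) ∧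
    ((b - a) / (3 * n) * (f a + 2 * ∑ i ∈ Finset.Ico 1 (n / 2), f (a + (2 * i : ℕ) * (b - a) / n) + 4 * ∑ i ∈ Finset.Icc 1 (n / 2), f (a + (2 * i - 1 : ℕ) * (b - a) / n) + f b)) / (b - a) ≤ min (f a) (f b) + Φ (b - a) / 2 := by
  obtain ⟨m, rfl⟩ := hne
  have hm : m ≠ 0 := by omega
  rw [← two_mul]
  exact ⟨le_simpsonSum_div hsuper hhold hab hm, simpsonSum_div_le hsuper hhold hab hm⟩

theorem simpson_phi_holder_superadditive
    (a b : ℝ) (hab : a < b) (f Φ : ℝ → ℝ)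
    (hΦ : ∀ t ∈ Set.Icc (0 : ℝ) (b - a), 0 ≤ Φ t)
    (hsuper : ∀ x y, 0 ≤ x → 0 ≤ y → x + y ≤ b - a → Φ x + Φ y ≤ Φ (x + y))
    (hf : ContinuousOn f (Set.Icc a b))
    (hhold : ∀ x ∈ Set.Icc a b, ∀ y ∈ Set.Icc a b, |f x - f y| ≤ Φ |x - y|)
    (n : ℕ) (hn : 2 ≤ n) (hne : Even n) :
    max (f a) (f b) - Φ (b - a) / 2 ≤ ((b - a) / (3 * n) * (f a + 2 * ∑ i ∈ Finset.Ico 1 (n / 2), f (a + (2 * i : ℕ) * (b - a) / n) + 4 * ∑ i ∈ Finset.Icc 1 (n / 2), f (a + (2 * i - 1 : ℕ) * (b - a) / n) + f b)) / (b - a) ∧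
    ((b - a) / (3 * n) * (f a + 2 * ∑ i ∈ Finset.Ico 1 (n / 2), f (a + (2 * i : ℕ) * (b - a) / n) + 4 * ∑ i ∈ Finset.Icc 1 (n / 2), f (a + (2 * i - 1 : ℕ) * (b - a) / n) + f b)) / (b - a) ≤ min (f a) (f b) + Φ (b - a) / 2 :=
  simpson_phi_holder_superadditive_general a b hab f Φ hsuper hhold n hn hne
end

section
/- Let f:[a,b]→ℝ be continuous and Φ-convex. Then for every even n ∈ ℕ, n ≥ 2, f((a+b)/2) − ((n²+2)/12)·Φ((b−a)/n) ≤ T_n(f)/(b−a), where T_n(f) is the composite trapezoidal sum with n equal subintervals. -/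
/-!
On the grid `x_j = a + j h`, `h = (b - a) / n`, the midpoint case `t = 1/2` of Φ-convexity
says that `j ↦ f (x_j) + Φ h · j²` is discretely convex, since the second
difference of `j²` is `2`. For a discretely convex sequence on `{0, …, 2m}` the values at
`j` and `2m - j` average to at least the middle value, so pairing each trapezoid with its mirror
image bounds the trapezoidal sum below by `2m` times the middle value. Removing the quadratic
again costs `Φ h` times the trapezoidal mean of `j²` minus `m²`, which is `(n² + 2) / 12`.
-/

open Finset

def PhiConvexOn (s : Set ℝ) (Φ f : ℝ → ℝ) : Prop :=
  ∀ x ∈ s, ∀ y ∈ s, ∀ t ∈ Set.Icc (0 : ℝ) 1, f (t * x + (1 - t) * y) ≤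
    t * f x + (1 - t) * f y + t * Φ ((1 - t) * |y - x|) + (1 - t) * Φ (t * |y - x|)

theorem PhiConvexOn.map_midpoint_le {s : Set ℝ} {Φ f : ℝ → ℝ} (hf : PhiConvexOn s Φ f)
    {x y : ℝ} (hx : x ∈ s) (hy : y ∈ s) :
    f ((x + y) / 2) ≤ (f x + f y) / 2 + Φ (|y - x| / 2) := by
  have h := hf x hx y hy (1 / 2) ⟨by norm_num, by norm_num⟩
  rw [show (1 : ℝ) - 1 / 2 = 1 / 2 by norm_num, show 1 / 2 * x + 1 / 2 * y = (x + y) / 2 by ring,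
    show 1 / 2 * |y - x| = |y - x| / 2 by ring] at h
  linarith

def DiscreteConvexOn (h : ℕ → ℝ) (n : ℕ) : Prop :=
  ∀ j, j + 2 ≤ n → 2 * h (j + 1) ≤ h j + h (j + 2)

noncomputable def trapezoidSum (g : ℕ → ℝ) (n : ℕ) : ℝ :=
  ∑ j ∈ range n, (g j + g (j + 1)) / 2

theorem trapezoidSum_eq {g : ℕ → ℝ} {n : ℕ} (hn : 1 ≤ n) :
    trapezoidSum g n = g 0 / 2 + ∑ j ∈ Ico 1 n, g j + g n / 2 := by
  induction n, hn using Nat.le_induction with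
  | base => simp [trapezoidSum]; ring
  | succ n hn ih =>
    rw [trapezoidSum, sum_range_succ, ← trapezoidSum, ih, sum_Ico_succ_top hn]
    ring

theorem trapezoidSum_add_mul (g q : ℕ → ℝ) (c : ℝ) (n : ℕ) :
    trapezoidSum (fun j => g j + c * q j) n = trapezoidSum g n + c * trapezoidSum q n := by
  simp only [trapezoidSum, mul_sum, ← sum_add_distrib]
  exact sum_congr rfl fun _ _ => by ring

theorem trapezoidSum_sq (n : ℕ) :
    trapezoidSum (fun j => (j : ℝ) ^ 2) n = n * (2 * n ^ 2 + 1) / 6 := by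
  induction n with
  | zero => simp [trapezoidSum]
  | succ n ih =>
    rw [trapezoidSum, sum_range_succ, ← trapezoidSum, ih]
    push_cast
    ring

namespace DiscreteConvexOn

variable {h : ℕ → ℝ} {n m : ℕ}

theorem sub_le_sub (hh : DiscreteConvexOn h n) {i j : ℕ} (hij : i ≤ j) (hj : j + 1 ≤ n) :
    h (i + 1) - h i ≤ h (j + 1) - h j := by
  induction j, hij using Nat.le_induction with
  | base => exact le_rfl
  | succ j _ ih => linarith [ih (by omega), hh j (by omega)]

theorem two_mul_le_add_sub_add (hh : DiscreteConvexOn h (2 * m)) {k : ℕ} (hk : k ≤ m) :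
    2 * h m ≤ h (m - k) + h (m + k) := by
  induction k with
  | zero => simp only [Nat.sub_zero, Nat.add_zero]; linarith
  | succ k ih =>
    have hslope := hh.sub_le_sub (i := m - (k + 1)) (j := m + k) (by omega) (by omega)
    rw [show m - (k + 1) + 1 = m - k by omega] at hslope
    rw [← Nat.add_assoc]
    linarith [ih (by omega)]

theorem two_mul_le_add_reflect (hh : DiscreteConvexOn h (2 * m)) {j : ℕ} (hj : j ≤ 2 * m) :
    2 * h m ≤ h j + h (2 * m - j) := by
  rcases le_total j m with hjm | hmj
  · have := hh.two_mul_le_add_sub_add (k := m - j) (by omega)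
    rwa [show m - (m - j) = j by omega, show m + (m - j) = 2 * m - j by omega] at this
  · have := hh.two_mul_le_add_sub_add (k := j - m) (by omega)
    rwa [show m - (j - m) = 2 * m - j by omega, show m + (j - m) = j by omega, add_comm] at this

theorem mul_le_trapezoidSum (hh : DiscreteConvexOn h (2 * m)) :
    2 * m * h m ≤ trapezoidSum h (2 * m) := by
  have hpair : ∀ j ∈ range (2 * m), 2 * h m ≤
      (h j + h (j + 1)) / 2 + (h (2 * m - 1 - j) + h (2 * m - 1 - j + 1)) / 2 := by
    intro j hj
    rw [mem_range] at hj
    have h₁ := hh.two_mul_le_add_reflect (j := j) (by omega)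
    have h₂ := hh.two_mul_le_add_reflect (j := j + 1) (by omega)
    rw [show 2 * m - 1 - j + 1 = 2 * m - j by omega]
    rw [show 2 * m - (j + 1) = 2 * m - 1 - j by omega] at h₂
    linarith
  have hsum := sum_le_sum hpair
  rw [sum_add_distrib, sum_range_reflect (fun j => (h j + h (j + 1)) / 2), sum_const,
    card_range, nsmul_eq_mul] at hsum
  simp only [trapezoidSum]
  push_cast at hsum
  linarith

end DiscreteConvexOn

theorem midpoint_sub_le_trapezoidSum_div {g : ℕ → ℝ} {P : ℝ} {m : ℕ} (hm : 0 < m)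
    (hg : DiscreteConvexOn (fun j => g j + P * (j : ℝ) ^ 2) (2 * m)) :
    g m - (((2 * m : ℕ) : ℝ) ^ 2 + 2) / 12 * P ≤ trapezoidSum g (2 * m) / (2 * m : ℕ) := by
  have key := hg.mul_le_trapezoidSum
  rw [trapezoidSum_add_mul, trapezoidSum_sq] at key
  rw [le_div_iff₀ (by positivity)]
  push_cast at key ⊢
  linear_combination key

theorem grid_mem_Icc {a b : ℝ} (hab : a ≤ b) {j n : ℕ} (hj : j ≤ n) :
    a + j * (b - a) / n ∈ Set.Icc a b := by
  have hba : 0 ≤ b - a := sub_nonneg.2 hab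
  rw [mul_div_right_comm]
  have hjn : (j : ℝ) / n ≤ 1 := div_le_one_of_le₀ (by exact_mod_cast hj) (Nat.cast_nonneg n)
  have hj0 : 0 ≤ (j : ℝ) / n := by positivity
  constructor <;> nlinarith

theorem PhiConvexOn.discreteConvexOn_grid {a b : ℝ} {Φ f : ℝ → ℝ}
    (hf : PhiConvexOn (Set.Icc a b) Φ f) (hab : a ≤ b) (n : ℕ) :
    DiscreteConvexOn (fun j => f (a + j * (b - a) / n) + Φ ((b - a) / n) * (j : ℝ) ^ 2) n := by
  intro j hj
  have hmid := hf.map_midpoint_le (grid_mem_Icc hab (j := j) (n := n) (by omega))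
    (grid_mem_Icc hab (j := j + 2) hj)
  have hh : 0 ≤ (b - a) / n := div_nonneg (sub_nonneg.2 hab) (Nat.cast_nonneg n)
  have hstep :
      |a + ((j + 2 : ℕ) : ℝ) * (b - a) / n - (a + j * (b - a) / n)| / 2 = (b - a) / n := by
    rw [show a + ((j + 2 : ℕ) : ℝ) * (b - a) / n - (a + j * (b - a) / n) = 2 * ((b - a) / n) by
      push_cast; ring, abs_mul, abs_two, abs_of_nonneg hh]
    ring
  rw [hstep, show (a + j * (b - a) / n + (a + ((j + 2 : ℕ) : ℝ) * (b - a) / n)) / 2 =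
    a + ((j + 1 : ℕ) : ℝ) * (b - a) / n by push_cast; ring] at hmid
  push_cast at hmid ⊢
  linear_combination 2 * hmid

theorem trapezoid_phi_convex_lower_even_general
    (a b : ℝ) (hab : a < b) (f Φ : ℝ → ℝ)
    (hconv : ∀ x ∈ Set.Icc a b, ∀ y ∈ Set.Icc a b, ∀ t ∈ Set.Icc (0:ℝ) 1, f (t * x + (1 - t) * y) ≤ t * f x + (1 - t) * f y + t * Φ ((1 - t) * |y - x|) + (1 - t) * Φ (t * |y - x|))
    (n : ℕ) (hn : 2 ≤ n) (hne : Even n) :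
    f ((a + b) / 2) - (((n : ℝ) ^ 2 + 2) / 12) * Φ ((b - a) / n) ≤ ((b - a) / (2 * n) * (f a + 2 * ∑ i ∈ Finset.Ico 1 n, f (a + i * (b - a) / n) + f b)) / (b - a) := by
  obtain ⟨m, rfl⟩ := even_iff_two_dvd.mp hne
  have hm : 0 < m := by omega
  have key := midpoint_sub_le_trapezoidSum_div hm
    (PhiConvexOn.discreteConvexOn_grid hconv hab.le (2 * m))
  rw [trapezoidSum_eq (by omega)] at key
  have hmid : a + (m : ℝ) * (b - a) / ((2 * m : ℕ) : ℝ) = (a + b) / 2 := by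
    push_cast
    field_simp
    ring
  have hend : a + ((2 * m : ℕ) : ℝ) * (b - a) / ((2 * m : ℕ) : ℝ) = b := by
    field_simp
    ring
  simp only [Nat.cast_zero, zero_mul, zero_div, add_zero, hmid, hend] at key
  convert key using 1
  have : b - a ≠ 0 := (sub_pos.2 hab).ne'
  field_simp

theorem trapezoid_phi_convex_lower_even
    (a b : ℝ) (hab : a < b) (f Φ : ℝ → ℝ)
    (hΦ : ∀ t ∈ Set.Icc (0 : ℝ) (b - a), 0 ≤ Φ t)
    (hf : ContinuousOn f (Set.Icc a b))
    (hconv : ∀ x ∈ Set.Icc a b, ∀ y ∈ Set.Icc a b, ∀ t ∈ Set.Icc (0:ℝ) 1, f (t * x + (1 - t) * y) ≤ t * f x + (1 - t) * f y + t * Φ ((1 - t) * |y - x|) + (1 - t) * Φ (t * |y - x|))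
    (n : ℕ) (hn : 2 ≤ n) (hne : Even n) :
    f ((a + b) / 2) - (((n : ℝ) ^ 2 + 2) / 12) * Φ ((b - a) / n) ≤ ((b - a) / (2 * n) * (f a + 2 * ∑ i ∈ Finset.Ico 1 n, f (a + i * (b - a) / n) + f b)) / (b - a) :=
  trapezoid_phi_convex_lower_even_general a b hab f Φ hconv n hn hne
end
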